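/- Let d ≥ 3, γ > 0, and let λ, μ ∈ ℝ with μ > 0 and λ + 2μ > 0. Then there exists a constant C > 0, depending only on γ, d, λ, μ, such that for every measurable real-valued V : ℝ^d → ℝ with negative part V₋ := max(−V, 0) ∈ L^{γ + d/2}(ℝ^d), and every smooth compactly supported vector field u ∈ [C_c^∞(ℝ^d)]^d with ∑_{j=1}^d ∫_{ℝ^d} |u_j|² dx = 1, one has μ ∑_{j=1}^d ∫_{ℝ^d} |∇u_j(x)|² dx + (λ + μ) ∫_{ℝ^d} |div u(x)|² dx − ∫_{ℝ^d} V₋(x) |u(x)|² dx ≥ −C ( ∫_{ℝ^d} V₋(x)^{γ + d/2} dx )^{1/γ}. -/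

import Mathlib

open MeasureTheory Real
open scoped NNReal ENNReal

noncomputable section

/-- Euclidean space `ℝ^d`. -/
abbrev Ed (d : ℕ) := EuclideanSpace ℝ (Fin d)

/-- Partial derivative `∂_k f` of a function `f : ℝ^d → ℂ`. -/
def pd {d : ℕ} (f : Ed d → ℂ) (k : Fin d) (x : Ed d) : ℂ :=
  fderiv ℝ f x (EuclideanSpace.single k 1)

/-- The Laplacian `Δf = ∑_k ∂_k ∂_k f` of a function `f : ℝ^d → ℂ`. -/
def lap {d : ℕ} (f : Ed d → ℂ) (x : Ed d) : ℂ :=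
  ∑ k, pd (fun y => pd f k y) k x

/-- The divergence `div f = ∑_j ∂_j f_j` of a vector field `f : ℝ^d → ℂ^d`. -/
def dvg {d : ℕ} (f : Fin d → Ed d → ℂ) (x : Ed d) : ℂ :=
  ∑ j, pd (f j) j x


variable {d : ℕ}

lemma contDiff_pd {f : Ed d → ℂ} (hf : ContDiff ℝ (⊤ : ℕ∞) f) (k : Fin d) :
    ContDiff ℝ (⊤ : ℕ∞) (pd f k) := by
  have := (ContinuousLinearMap.apply ℝ ℂ (EuclideanSpace.single (𝕜 := ℝ) k 1)).contDiff.comp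
    (hf.fderiv_right (m := (⊤ : ℕ∞)) (by simp))
  exact this

lemma hcs_pd {f : Ed d → ℂ} (hf : HasCompactSupport f) (k : Fin d) :
    HasCompactSupport (pd f k) :=
  hf.fderiv_apply ℝ (EuclideanSpace.single k 1)

lemma cont_pd {f : Ed d → ℂ} (hf : ContDiff ℝ (⊤ : ℕ∞) f) (k : Fin d) : Continuous (pd f k) :=
  (contDiff_pd hf k).continuous

/-- bilinear map (a,b) ↦ a * conj b, real-bilinear on ℂ. -/
def Bc : ℂ →L[ℝ] ℂ →L[ℝ] ℂ :=
  (((ContinuousLinearMap.mul ℝ ℂ).flip.comp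
    (Complex.conjCLE.toContinuousLinearMap)).flip)

@[simp] lemma Bc_apply (a b : ℂ) : Bc a b = a * (starRingEnd ℂ) b := rfl

-- symmetry of second derivatives
lemma pd_comm {f : Ed d → ℂ} (hf : ContDiff ℝ (⊤ : ℕ∞) f) (j k : Fin d) (x : Ed d) :
    pd (pd f j) k x = pd (pd f k) j x := by
  have hdiff : Differentiable ℝ f := hf.differentiable (by simp)
  have hdf : ContDiff ℝ (⊤ : ℕ∞) (fderiv ℝ f) := hf.fderiv_right (m := (⊤ : ℕ∞)) (by simp)
  have hx : HasFDerivAt (fderiv ℝ f) (fderiv ℝ (fderiv ℝ f) x) x :=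
    (hdf.differentiable (by simp) x).hasFDerivAt
  have hev : ∀ (v w : Fin d),
      pd (pd f v) w x = fderiv ℝ (fderiv ℝ f) x (EuclideanSpace.single w 1)
        (EuclideanSpace.single v 1) := by
    intro v w
    have h1 : (fun y => pd f v y) =
        (fun L : Ed d →L[ℝ] ℂ => L (EuclideanSpace.single v 1)) ∘ (fderiv ℝ f) := rfl
    have h2 : HasFDerivAt (pd f v)
        ((ContinuousLinearMap.apply ℝ ℂ (EuclideanSpace.single (𝕜 := ℝ) v 1)).comp
          (fderiv ℝ (fderiv ℝ f) x)) x :=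
      (ContinuousLinearMap.apply ℝ ℂ (EuclideanSpace.single (𝕜 := ℝ) v 1)).hasFDerivAt.comp x hx
    simp only [pd]
    rw [h2.fderiv]
    rfl
  rw [hev j k, hev k j]
  exact second_derivative_symmetric (fun y => (hdiff y).hasFDerivAt) hx _ _

lemma integrable_cc {f g : Ed d → ℂ} (hf : Continuous f) (hg : Continuous g)
    (h : HasCompactSupport f) :
    Integrable (fun x => f x * (starRingEnd ℂ) (g x)) volume :=
  (hf.mul (continuous_star.comp hg)).integrable_of_hasCompactSupport h.mul_right

lemma ibp_swap {f g : Ed d → ℂ} (hf : ContDiff ℝ (⊤ : ℕ∞) f) (hcf : HasCompactSupport f)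
    (hg : ContDiff ℝ (⊤ : ℕ∞) g) (hcg : HasCompactSupport g) (j k : Fin d) :
    ∫ x, pd f j x * (starRingEnd ℂ) (pd g k x) =
      ∫ x, pd f k x * (starRingEnd ℂ) (pd g j x) := by
  have hgd : Differentiable ℝ g := hg.differentiable (by simp)
  have step : ∀ a b : Fin d,
      ∫ x, pd f a x * (starRingEnd ℂ) (pd g b x) =
        - ∫ x, pd (pd f a) b x * (starRingEnd ℂ) (g x) := by
    intro a b
    have := integral_bilinear_fderiv_right_eq_neg_left_of_integrable
      (μ := (volume : Measure (Ed d))) (B := Bc) (f := pd f a) (g := g)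
      (v := EuclideanSpace.single b 1)
      (integrable_cc (cont_pd (contDiff_pd hf a) b) hg.continuous (hcs_pd (hcs_pd hcf a) b))
      (integrable_cc (cont_pd hf a) (cont_pd hg b) (hcs_pd hcf a))
      (integrable_cc (cont_pd hf a) hg.continuous (hcs_pd hcf a))
      (fun x _ => (contDiff_pd hf a).differentiable (by simp) x) (fun x _ => hgd x)
    simpa [Bc_apply, pd] using this
  rw [step j k, step k j]
  congr 1
  apply integral_congr_ae
  filter_upwards with x
  rw [pd_comm hf j k x]

lemma integrable_pd_sq {u : Fin d → Ed d → ℂ} (hsm : ∀ j, ContDiff ℝ (⊤ : ℕ∞) (u j))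
    (hcs : ∀ j, HasCompactSupport (u j)) (j k : Fin d) :
    Integrable (fun x => ‖pd (u j) k x‖^2) volume := by
  apply Continuous.integrable_of_hasCompactSupport
  · exact ((cont_pd (hsm j) k).norm.pow 2)
  · exact ((hcs_pd (hcs j) k).norm).comp_left (g := fun t : ℝ => t^2) (by simp)

lemma dvg_sq_le_sum {u : Fin d → Ed d → ℂ} (hsm : ∀ j, ContDiff ℝ (⊤ : ℕ∞) (u j))
    (hcs : ∀ j, HasCompactSupport (u j)) :
    ∫ x, ‖dvg u x‖^2 ≤ ∑ j, ∑ k, ∫ x, ‖pd (u j) k x‖^2 := by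
  have hint : ∀ a b c e : Fin d,
      Integrable (fun x => (pd (u a) b x * (starRingEnd ℂ) (pd (u c) e x)).re) volume := by
    intro a b c e
    exact (integrable_cc (cont_pd (hsm a) b) (cont_pd (hsm c) e) (hcs_pd (hcs a) b)).re
  have expand : ∀ x : Ed d, ‖dvg u x‖^2 =
      ∑ j, ∑ k, (pd (u j) j x * (starRingEnd ℂ) (pd (u k) k x)).re := by
    intro x
    have : ‖dvg u x‖^2 = (dvg u x * (starRingEnd ℂ) (dvg u x)).re := by
      rw [Complex.mul_conj]
      simp [Complex.sq_norm]
    rw [this]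
    simp only [dvg, map_sum, Finset.sum_mul_sum, Complex.re_sum]
  calc ∫ x, ‖dvg u x‖^2
      = ∫ x, ∑ j, ∑ k, (pd (u j) j x * (starRingEnd ℂ) (pd (u k) k x)).re := by
        simp only [expand]
    _ = ∑ j, ∑ k, ∫ x, (pd (u j) j x * (starRingEnd ℂ) (pd (u k) k x)).re := by
        rw [integral_finset_sum _ (fun j _ => integrable_finset_sum _ (fun k _ => hint j j k k))]
        exact Finset.sum_congr rfl fun j _ => integral_finset_sum _ (fun k _ => hint j j k k)
    _ = ∑ j, ∑ k, (∫ x, pd (u j) j x * (starRingEnd ℂ) (pd (u k) k x)).re := by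
        refine Finset.sum_congr rfl fun j _ => Finset.sum_congr rfl fun k _ => ?_
        exact integral_re (integrable_cc (cont_pd (hsm j) j) (cont_pd (hsm k) k)
          (hcs_pd (hcs j) j))
    _ = ∑ j, ∑ k, (∫ x, pd (u j) k x * (starRingEnd ℂ) (pd (u k) j x)).re := by
        refine Finset.sum_congr rfl fun j _ => Finset.sum_congr rfl fun k _ => ?_
        rw [ibp_swap (hsm j) (hcs j) (hsm k) (hcs k) j k]
    _ ≤ ∑ j, ∑ k, ∫ x, (‖pd (u j) k x‖^2 + ‖pd (u k) j x‖^2)/2 := by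
        refine Finset.sum_le_sum fun j _ => Finset.sum_le_sum fun k _ => ?_
        have h1 : (∫ x, pd (u j) k x * (starRingEnd ℂ) (pd (u k) j x)).re
            ≤ ‖∫ x, pd (u j) k x * (starRingEnd ℂ) (pd (u k) j x)‖ :=
          Complex.re_le_norm _
        refine h1.trans ?_
        refine (norm_integral_le_integral_norm _).trans ?_
        refine integral_mono ((integrable_cc (cont_pd (hsm j) k) (cont_pd (hsm k) j)
          (hcs_pd (hcs j) k)).norm) ?_ ?_
        · exact (((integrable_pd_sq hsm hcs j k).add (integrable_pd_sq hsm hcs k j)).div_const 2)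
        · intro x
          simp only [norm_mul, Complex.norm_conj]
          have := sq_nonneg (‖pd (u j) k x‖ - ‖pd (u k) j x‖)
          have hnn : (0:ℝ) ≤ ‖pd (u j) k x‖ := norm_nonneg _
          nlinarith [norm_nonneg (pd (u k) j x)]
    _ = ∑ j, ∑ k, ((∫ x, ‖pd (u j) k x‖^2) + (∫ x, ‖pd (u k) j x‖^2))/2 := by
        refine Finset.sum_congr rfl fun j _ => Finset.sum_congr rfl fun k _ => ?_
        rw [integral_div, integral_add (integrable_pd_sq hsm hcs j k)
          (integrable_pd_sq hsm hcs k j)]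
    _ = ∑ j, ∑ k, ∫ x, ‖pd (u j) k x‖^2 := by
        have hc : ∑ j : Fin d, ∑ k : Fin d, (∫ x, ‖pd (u k) j x‖^2)
            = ∑ j : Fin d, ∑ k : Fin d, (∫ x, ‖pd (u j) k x‖^2) := Finset.sum_comm ..
        simp only [add_div, Finset.sum_add_distrib, ← Finset.sum_div, hc]
        ring

abbrev Cd (d : ℕ) := EuclideanSpace ℂ (Fin d)

def Uf (u : Fin d → Ed d → ℂ) : Ed d → Cd d :=
  fun x => (WithLp.equiv 2 (Fin d → ℂ)).symm (fun j => u j x)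

lemma Uf_contDiff {u : Fin d → Ed d → ℂ} (hsm : ∀ j, ContDiff ℝ (⊤ : ℕ∞) (u j)) :
    ContDiff ℝ 1 (Uf u) := by
  have : Uf u = (PiLp.continuousLinearEquiv 2 ℝ (fun _ : Fin d => ℂ)).symm ∘
      (fun x (j : Fin d) => u j x) := rfl
  rw [this]
  exact ((PiLp.continuousLinearEquiv 2 ℝ (fun _ : Fin d => ℂ)).symm
    : (∀ _ : Fin d, ℂ) →L[ℝ] Cd d).contDiff.comp
    (contDiff_pi.mpr fun j => (hsm j).of_le (by simp))

lemma Uf_hcs {u : Fin d → Ed d → ℂ} (hcs : ∀ j, HasCompactSupport (u j)) :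
    HasCompactSupport (Uf u) := by
  apply HasCompactSupport.intro (K := ⋃ j, tsupport (u j))
    (isCompact_iUnion (fun j => hcs j))
  intro x hx
  have : ∀ j, u j x = 0 := fun j =>
    image_eq_zero_of_notMem_tsupport (fun h => hx (Set.mem_iUnion.mpr ⟨j, h⟩))
  ext j
  simp [Uf, this j]

lemma Uf_norm_sq {u : Fin d → Ed d → ℂ} (x : Ed d) :
    ‖Uf u x‖^2 = ∑ j, ‖u j x‖^2 := by
  rw [PiLp.norm_sq_eq_of_L2]
  rfl

lemma Uf_fderiv_apply {u : Fin d → Ed d → ℂ} (hsm : ∀ j, ContDiff ℝ (⊤ : ℕ∞) (u j))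
    (x v : Ed d) :
    fderiv ℝ (Uf u) x v = (WithLp.equiv 2 (Fin d → ℂ)).symm
      (fun j => fderiv ℝ (u j) x v) := by
  have hdiff : ∀ j, DifferentiableAt ℝ (u j) x :=
    fun j => ((hsm j).differentiable (by simp) x)
  have h1 : HasFDerivAt (fun x (j : Fin d) => u j x)
      (ContinuousLinearMap.pi (fun j => fderiv ℝ (u j) x)) x :=
    hasFDerivAt_pi.mpr (fun j => (hdiff j).hasFDerivAt)
  have h2 : HasFDerivAt (Uf u)
      (((PiLp.continuousLinearEquiv 2 ℝ (fun _ : Fin d => ℂ)).symm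
        : (∀ _ : Fin d, ℂ) →L[ℝ] Cd d).comp
        (ContinuousLinearMap.pi (fun j => fderiv ℝ (u j) x))) x :=
    (((PiLp.continuousLinearEquiv 2 ℝ (fun _ : Fin d => ℂ)).symm
        : (∀ _ : Fin d, ℂ) →L[ℝ] Cd d)).hasFDerivAt.comp x h1
  rw [h2.fderiv]
  rfl

lemma Uf_fderiv_sq_le {u : Fin d → Ed d → ℂ} (hsm : ∀ j, ContDiff ℝ (⊤ : ℕ∞) (u j)) (x : Ed d) :
    ‖fderiv ℝ (Uf u) x‖^2 ≤ ∑ j, ∑ k, ‖pd (u j) k x‖^2 := by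
  set S : ℝ := ∑ j, ∑ k, ‖pd (u j) k x‖^2 with hS
  have hSnn : 0 ≤ S := Finset.sum_nonneg fun j _ => Finset.sum_nonneg fun k _ => sq_nonneg _
  have hexp : ∀ (v : Ed d) (j : Fin d), fderiv ℝ (u j) x v = ∑ k, v k • pd (u j) k x := by
    intro v j
    have hv : v = ∑ k, v k • EuclideanSpace.single k 1 := by
      have := (EuclideanSpace.basisFun (Fin d) ℝ).sum_repr v
      simp only [EuclideanSpace.basisFun_repr, EuclideanSpace.basisFun_apply] at this
      exact this.symm
    conv_lhs => rw [hv]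
    rw [map_sum]
    simp [pd]
  have hopn : ‖fderiv ℝ (Uf u) x‖ ≤ Real.sqrt S := by
    apply ContinuousLinearMap.opNorm_le_bound _ (Real.sqrt_nonneg S)
    intro v
    have hsq : ‖fderiv ℝ (Uf u) x v‖^2 ≤ S * ‖v‖^2 := by
      rw [Uf_fderiv_apply hsm]
      rw [PiLp.norm_sq_eq_of_L2]
      have hj : ∀ j : Fin d, ‖fderiv ℝ (u j) x v‖^2 ≤ (∑ k, ‖pd (u j) k x‖^2) * ‖v‖^2 := by
        intro j
        have h1 : ‖fderiv ℝ (u j) x v‖ ≤ ∑ k, |v k| * ‖pd (u j) k x‖ := by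
          rw [hexp v j]
          refine (norm_sum_le _ _).trans ?_
          refine Finset.sum_le_sum fun k _ => ?_
          rw [norm_smul]
          simp [Real.norm_eq_abs]
        have h2 : (∑ k, |v k| * ‖pd (u j) k x‖)^2 ≤
            (∑ k, |v k|^2) * (∑ k, ‖pd (u j) k x‖^2) :=
          Finset.sum_mul_sq_le_sq_mul_sq _ _ _
        have h3 : (∑ k, |v k|^2) = ‖v‖^2 := by
          rw [PiLp.norm_sq_eq_of_L2]
          simp [Real.norm_eq_abs]
        calc ‖fderiv ℝ (u j) x v‖^2 ≤ (∑ k, |v k| * ‖pd (u j) k x‖)^2 := by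
              apply pow_le_pow_left₀ (norm_nonneg _) h1
          _ ≤ (∑ k, |v k|^2) * (∑ k, ‖pd (u j) k x‖^2) := h2
          _ = (∑ k, ‖pd (u j) k x‖^2) * ‖v‖^2 := by rw [h3]; ring
      calc ∑ j, ‖((WithLp.equiv 2 (Fin d → ℂ)).symm fun j => fderiv ℝ (u j) x v) j‖^2
          = ∑ j, ‖fderiv ℝ (u j) x v‖^2 := rfl
        _ ≤ ∑ j, (∑ k, ‖pd (u j) k x‖^2) * ‖v‖^2 := Finset.sum_le_sum fun j _ => hj j
        _ = S * ‖v‖^2 := by rw [← Finset.sum_mul]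
    have := Real.sqrt_le_sqrt hsq
    rwa [Real.sqrt_sq (norm_nonneg _), Real.sqrt_mul hSnn, Real.sqrt_sq (norm_nonneg v)]
      at this
  calc ‖fderiv ℝ (Uf u) x‖^2 ≤ (Real.sqrt S)^2 :=
        pow_le_pow_left₀ (norm_nonneg _) hopn 2
    _ = S := Real.sq_sqrt hSnn

/-- Sobolev constant for our setting. -/
def SobC (d : ℕ) : ℝ :=
  ((MeasureTheory.SNormLESNormFDerivOfEqConst (Cd d) (volume : Measure (Ed d)) 2 : ℝ≥0) : ℝ)

lemma SobC_nonneg (d : ℕ) : 0 ≤ SobC d := NNReal.coe_nonneg _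

lemma key_bound (d : ℕ) (hd : 3 ≤ d) (γ : ℝ) (hγ : 0 < γ)
    (W : Ed d → ℝ) (hW : Measurable W) (hWnn : ∀ x, 0 ≤ W x)
    (hWp : MemLp W (ENNReal.ofReal (γ + d/2)) volume)
    (u : Fin d → Ed d → ℂ) (hsm : ∀ j, ContDiff ℝ (⊤ : ℕ∞) (u j))
    (hcs : ∀ j, HasCompactSupport (u j))
    (hnorm : (∑ j, ∫ x, ‖u j x‖^2) = 1) :
    (∫ x, W x * ∑ j, ‖u j x‖^2) ≤
      (∫ x, W x ^ (γ + (d:ℝ)/2)) ^ (1/(γ + (d:ℝ)/2))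
        * (SobC d + 1) ^ ((d:ℝ)/(γ + (d:ℝ)/2))
        * (∑ j, ∫ x, ∑ k, ‖pd (u j) k x‖^2) ^ ((d:ℝ)/(2*(γ + (d:ℝ)/2))) := by
  have hdR : (3:ℝ) ≤ (d:ℝ) := by exact_mod_cast hd
  set pR : ℝ := γ + (d:ℝ)/2 with hpRdef
  have hpR : 0 < pR := by positivity
  have hpR0 : pR ≠ 0 := hpR.ne'
  have hd2R : (0:ℝ) < (d:ℝ) - 2 := by linarith
  -- exponent p' = 2d/(d-2)
  set p' : ℝ≥0 := 2 * (d:ℝ≥0) / ((d:ℝ≥0) - 2) with hp'def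
  have hd2 : (2:ℝ≥0) ≤ (d:ℝ≥0) := by
    have : (2:ℕ) ≤ d := by omega
    exact_mod_cast this
  have hp'R : ((p' : ℝ≥0) : ℝ) = 2*(d:ℝ)/((d:ℝ)-2) := by
    push_cast [hp'def, NNReal.coe_sub hd2]
    norm_num
  have hp'pos : (0:ℝ) < (p' : ℝ) := by rw [hp'R]; positivity
  have hp'0 : p' ≠ 0 := by
    intro h
    rw [h] at hp'pos
    simp at hp'pos
  -- basic objects
  have hUc : ContDiff ℝ 1 (Uf u) := Uf_contDiff hsm
  have hUs : HasCompactSupport (Uf u) := Uf_hcs hcs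
  set HS : Ed d → ℝ := fun x => ∑ j, ∑ k, ‖pd (u j) k x‖^2 with hHSdef
  have hHSnn : ∀ x, 0 ≤ HS x := fun x =>
    Finset.sum_nonneg fun j _ => Finset.sum_nonneg fun k _ => sq_nonneg _
  have hHSint : Integrable HS volume :=
    integrable_finset_sum _ fun j _ => integrable_finset_sum _ fun k _ =>
      integrable_pd_sq hsm hcs j k
  set T : ℝ := ∑ j, ∫ x, ∑ k, ‖pd (u j) k x‖^2 with hTdef
  have hT : ∫ x, HS x = T := by
    rw [hTdef]
    exact integral_finset_sum _ fun j _ =>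
      integrable_finset_sum _ fun k _ => integrable_pd_sq hsm hcs j k
  have hTnn : 0 ≤ T :=
    Finset.sum_nonneg fun j _ => integral_nonneg fun x =>
      Finset.sum_nonneg fun k _ => sq_nonneg _
  set JW : ℝ := ∫ x, W x ^ pR with hJWdef
  have hJWnn : 0 ≤ JW := integral_nonneg fun x => Real.rpow_nonneg (hWnn x) _
  -- lintegral quantities
  set eW : Ed d → ℝ≥0∞ := fun x => ENNReal.ofReal (W x) with heWdef
  set eU : Ed d → ℝ≥0∞ := fun x => (‖Uf u x‖₊ : ℝ≥0∞) with heUdef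
  have heU2 : ∀ x, eU x ^ (2:ℝ) = ENNReal.ofReal (‖Uf u x‖^2) := by
    intro x
    simp only [heUdef]
    rw [← enorm_eq_nnnorm, ← ofReal_norm,
      ENNReal.ofReal_rpow_of_nonneg (norm_nonneg _) (by norm_num : (0:ℝ) ≤ 2)]
    congr 1
    rw [show ((2:ℝ)) = ((2:ℕ):ℝ) by norm_num, Real.rpow_natCast]
  have heUmeas : Measurable eU := by
    have : Continuous (fun x => (‖Uf u x‖₊ : ℝ≥0∞)) :=
      ENNReal.continuous_coe.comp hUc.continuous.nnnorm
    simpa [heUdef] using this.measurable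
  -- squared-norm integral equals 1
  have hu2int : ∀ j, Integrable (fun x => ‖u j x‖^2) volume := fun j => by
    apply Continuous.integrable_of_hasCompactSupport
    · exact ((hsm j).continuous.norm.pow 2)
    · exact ((hcs j).norm).comp_left (g := fun t : ℝ => t^2) (by simp)
  have hU2int : Integrable (fun x => ‖Uf u x‖^2) volume := by
    have : (fun x => ‖Uf u x‖^2) = fun x => ∑ j, ‖u j x‖^2 := funext fun x => Uf_norm_sq x
    rw [this]
    exact integrable_finset_sum _ fun j _ => hu2int j
  have hUint1 : ∫ x, ‖Uf u x‖^2 = 1 := by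
    have : (fun x => ‖Uf u x‖^2) = fun x => ∑ j, ‖u j x‖^2 := funext fun x => Uf_norm_sq x
    rw [this, integral_finset_sum _ fun j _ => hu2int j]
    exact hnorm
  -- Step A : the weighted integral as a lintegral
  have hSmc : Continuous (fun x => ∑ j, ‖u j x‖^2) := by
    apply continuous_finset_sum
    intro j _
    exact ((hsm j).continuous.norm.pow 2)
  have hA : (∫ x, W x * ∑ j, ‖u j x‖^2)
      = (∫⁻ x, eW x * eU x ^ (2:ℝ)).toReal := by
    rw [integral_eq_lintegral_of_nonneg_ae
      (Filter.Eventually.of_forall fun x =>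
        mul_nonneg (hWnn x) (Finset.sum_nonneg fun j _ => sq_nonneg _))
      ((hW.mul hSmc.measurable).aestronglyMeasurable)]
    congr 1
    apply lintegral_congr
    intro x
    rw [heU2 x, ← Uf_norm_sq (u := u) x, ENNReal.ofReal_mul (hWnn x)]
  -- Hölder inequality with three factors
  have hHolder : (∫⁻ x, eW x * eU x ^ (2:ℝ))
      ≤ (∫⁻ x, eW x ^ pR) ^ (1/pR) * (∫⁻ x, eU x ^ ((p':ℝ))) ^ (((d:ℝ)-2)/(2*pR))
        * (∫⁻ x, eU x ^ (2:ℝ)) ^ (γ/pR) := by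
    have := ENNReal.lintegral_prod_norm_pow_le (μ := (volume : Measure (Ed d)))
      (Finset.univ : Finset (Fin 3))
      (f := ![fun x => eW x ^ pR, fun x => eU x ^ ((p':ℝ)), fun x => eU x ^ (2:ℝ)])
      (p := ![1/pR, ((d:ℝ)-2)/(2*pR), γ/pR])
      (by
        intro i _
        fin_cases i
        · exact (hW.ennreal_ofReal.pow_const pR).aemeasurable
        · exact (heUmeas.pow_const _).aemeasurable
        · exact (heUmeas.pow_const _).aemeasurable)
      (by
        show 1/pR + (((d:ℝ)-2)/(2*pR) + (γ/pR + 0)) = 1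
        field_simp
        ring)
      (by
        intro i _
        fin_cases i
        · exact (one_div_pos.mpr hpR).le
        · exact div_nonneg hd2R.le (by linarith)
        · exact div_nonneg hγ.le hpR.le)
    refine le_trans (le_of_eq ?_) (this.trans (le_of_eq ?_))
    · apply lintegral_congr
      intro x
      rw [Fin.prod_univ_three]
      simp only [Matrix.cons_val_zero, Matrix.cons_val_one, Matrix.head_cons,
        Matrix.cons_val_two, Matrix.tail_cons]
      have hnn1 : (0:ℝ) ≤ (p':ℝ) * (((d:ℝ)-2)/(2*pR)) :=
        mul_nonneg hp'pos.le (div_nonneg hd2R.le (by linarith))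
      have hnn2 : (0:ℝ) ≤ 2 * (γ/pR) :=
        mul_nonneg (by norm_num) (div_nonneg hγ.le hpR.le)
      rw [← ENNReal.rpow_mul, ← ENNReal.rpow_mul, ← ENNReal.rpow_mul,
        mul_one_div_cancel hpR0, ENNReal.rpow_one, mul_assoc,
        ← ENNReal.rpow_add_of_nonneg _ _ hnn1 hnn2]
      congr 2
      rw [hp'R]
      field_simp
      ring
    · rw [Fin.prod_univ_three]
      simp only [Matrix.cons_val_zero, Matrix.cons_val_one, Matrix.head_cons,
        Matrix.cons_val_two, Matrix.tail_cons]
  -- Step C : the V-part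
  have hWint : Integrable (fun x => W x ^ pR) volume := by
    have h1 : ENNReal.ofReal pR ≠ 0 := by
      simp only [ne_eq, ENNReal.ofReal_eq_zero, not_le]
      exact hpR
    have := hWp.integrable_norm_rpow h1 ENNReal.ofReal_ne_top
    rw [ENNReal.toReal_ofReal hpR.le] at this
    refine this.congr (Filter.Eventually.of_forall fun x => ?_)
    simp [Real.norm_of_nonneg (hWnn x)]
  have hC : (∫⁻ x, eW x ^ pR) = ENNReal.ofReal JW := by
    rw [hJWdef, ofReal_integral_eq_lintegral_ofReal hWint
      (Filter.Eventually.of_forall fun x => Real.rpow_nonneg (hWnn x) _)]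
    apply lintegral_congr
    intro x
    rw [heWdef]
    exact ENNReal.ofReal_rpow_of_nonneg (hWnn x) hpR.le
  -- Step D : L² mass is 1
  have hD : (∫⁻ x, eU x ^ (2:ℝ)) = 1 := by
    have : (∫⁻ x, eU x ^ (2:ℝ)) = ENNReal.ofReal (∫ x, ‖Uf u x‖^2) := by
      rw [ofReal_integral_eq_lintegral_ofReal hU2int
        (Filter.Eventually.of_forall fun x => sq_nonneg _)]
      exact lintegral_congr fun x => heU2 x
    rw [this, hUint1, ENNReal.ofReal_one]
  -- Step E : p'-lintegral as eLpNorm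
  have hE : (∫⁻ x, eU x ^ ((p':ℝ))) = eLpNorm (Uf u) p' volume ^ ((p':ℝ)) := by
    rw [eLpNorm_nnreal_eq_lintegral hp'0, ← ENNReal.rpow_mul,
      one_div_mul_cancel (ne_of_gt hp'pos), ENNReal.rpow_one]
    rfl
  -- Sobolev inequality
  have hfinrank : 0 < Module.finrank ℝ (Ed d) := by
    rw [finrank_euclideanSpace_fin]
    omega
  have hSob : eLpNorm (Uf u) p' volume ≤
      (MeasureTheory.SNormLESNormFDerivOfEqConst (Cd d) (volume : Measure (Ed d)) 2 : ℝ≥0∞)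
        * eLpNorm (fderiv ℝ (Uf u)) 2 volume := by
    have hcast : ((2:ℝ≥0) : ℝ≥0∞) = (2 : ℝ≥0∞) := by norm_cast
    have := MeasureTheory.eLpNorm_le_eLpNorm_fderiv_of_eq (u := Uf u)
      (μ := (volume : Measure (Ed d))) hUc hUs (p := (2:ℝ≥0)) (p' := p')
      (by norm_num) hfinrank
      (by
        rw [hp'R, finrank_euclideanSpace_fin]
        have h2 : (d:ℝ) - 2 ≠ 0 := ne_of_gt hd2R
        have h3 : (d:ℝ) ≠ 0 := by positivity
        push_cast
        field_simp)
    rwa [hcast] at this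
  -- Step F : gradient term bound
  have hF : eLpNorm (fderiv ℝ (Uf u)) 2 volume ≤ (ENNReal.ofReal T) ^ ((1:ℝ)/2) := by
    rw [eLpNorm_eq_lintegral_rpow_enorm_toReal two_ne_zero ENNReal.ofNat_ne_top]
    simp only [ENNReal.toReal_ofNat]
    have hb : (∫⁻ x, (‖fderiv ℝ (Uf u) x‖₊ : ℝ≥0∞) ^ (2:ℝ)) ≤ ENNReal.ofReal T := by
      rw [← hT, ofReal_integral_eq_lintegral_ofReal hHSint
        (Filter.Eventually.of_forall hHSnn)]
      refine lintegral_mono fun x => ?_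
      rw [← enorm_eq_nnnorm, ← ofReal_norm,
        ENNReal.ofReal_rpow_of_nonneg (norm_nonneg _) (by norm_num : (0:ℝ) ≤ 2)]
      apply ENNReal.ofReal_le_ofReal
      rw [show ((2:ℝ)) = ((2:ℕ):ℝ) by norm_num, Real.rpow_natCast]
      exact Uf_fderiv_sq_le hsm x
    exact ENNReal.rpow_le_rpow hb (by norm_num)
  -- Combine
  set Ke : ℝ≥0∞ := ENNReal.ofReal (SobC d + 1) with hKedef
  have hSobK : ((MeasureTheory.SNormLESNormFDerivOfEqConst (Cd d)
      (volume : Measure (Ed d)) 2 : ℝ≥0) : ℝ≥0∞) ≤ Ke := by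
    rw [hKedef, ← ENNReal.ofReal_coe_nnreal]
    apply ENNReal.ofReal_le_ofReal
    simp only [SobC]
    linarith
  have hdpRnn : (0:ℝ) ≤ (d:ℝ)/pR := div_nonneg (by positivity) hpR.le
  have hmain : (∫⁻ x, eW x * eU x ^ (2:ℝ)) ≤
      ENNReal.ofReal JW ^ (1/pR) * (Ke * ENNReal.ofReal T ^ ((1:ℝ)/2)) ^ ((d:ℝ)/pR) := by
    refine hHolder.trans ?_
    rw [hC, hD, hE, ENNReal.one_rpow, mul_one, ← ENNReal.rpow_mul]
    have hexp : (p':ℝ) * (((d:ℝ)-2)/(2*pR)) = (d:ℝ)/pR := by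
      rw [hp'R]
      field_simp
    rw [hexp]
    refine mul_le_mul_right (ENNReal.rpow_le_rpow (hSob.trans ?_) hdpRnn) _
    exact mul_le_mul' hSobK hF
  have hne : ENNReal.ofReal JW ^ (1/pR) * (Ke * ENNReal.ofReal T ^ ((1:ℝ)/2)) ^ ((d:ℝ)/pR)
      ≠ ∞ := by
    apply ENNReal.mul_ne_top
    · exact ENNReal.rpow_ne_top_of_nonneg (by positivity) ENNReal.ofReal_ne_top
    · exact ENNReal.rpow_ne_top_of_nonneg hdpRnn
        (ENNReal.mul_ne_top ENNReal.ofReal_ne_top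
          (ENNReal.rpow_ne_top_of_nonneg (by norm_num) ENNReal.ofReal_ne_top))
  rw [hA]
  refine le_trans (ENNReal.toReal_mono hne hmain) ?_
  rw [ENNReal.toReal_mul, ← ENNReal.toReal_rpow, ← ENNReal.toReal_rpow, ENNReal.toReal_mul,
    ← ENNReal.toReal_rpow, ENNReal.toReal_ofReal hJWnn, ENNReal.toReal_ofReal hTnn,
    hKedef, ENNReal.toReal_ofReal (add_nonneg (SobC_nonneg d) zero_le_one)]
  have hexp2 : (1:ℝ)/2 * ((d:ℝ)/pR) = (d:ℝ)/(2*pR) := by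
    rw [div_mul_div_comm, one_mul]
  rw [Real.mul_rpow (add_nonneg (SobC_nonneg d) zero_le_one) (Real.rpow_nonneg hTnn _),
    ← Real.rpow_mul hTnn, hexp2, ← mul_assoc]

lemma young_ineq {θ c a t : ℝ} (hθ : 0 < θ) (hθ1 : θ < 1) (hc : 0 < c) (ha : 0 ≤ a)
    (ht : 0 ≤ t) :
    a * t ^ θ ≤ c * t + c ^ (-(θ/(1-θ))) * a ^ (1/(1-θ)) := by
  have h1θ : (0:ℝ) < 1 - θ := by linarith
  set x := c * t with hx
  set y := a ^ (1/(1-θ)) * c ^ (-(θ/(1-θ))) with hy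
  have hxnn : 0 ≤ x := mul_nonneg hc.le ht
  have hynn : 0 ≤ y := mul_nonneg (Real.rpow_nonneg ha _) (Real.rpow_nonneg hc.le _)
  have key := Real.geom_mean_le_arith_mean2_weighted hθ.le h1θ.le hxnn hynn (by ring)
  have hcomp : x ^ θ * y ^ (1-θ) = a * t ^ θ := by
    rw [hx, hy, Real.mul_rpow hc.le ht,
      Real.mul_rpow (Real.rpow_nonneg ha _) (Real.rpow_nonneg hc.le _),
      ← Real.rpow_mul ha, ← Real.rpow_mul hc.le, one_div_mul_cancel h1θ.ne',
      Real.rpow_one, show -(θ/(1-θ)) * (1-θ) = -θ by field_simp]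
    rw [show c ^ θ * t ^ θ * (a * c ^ (-θ)) = (c ^ θ * c ^ (-θ)) * (a * t ^ θ) by ring,
      ← Real.rpow_add hc, add_neg_cancel, Real.rpow_zero, one_mul]
  calc a * t ^ θ = x ^ θ * y ^ (1-θ) := hcomp.symm
    _ ≤ θ * x + (1-θ) * y := key
    _ ≤ x + y := by nlinarith
    _ = c * t + c ^ (-(θ/(1-θ))) * a ^ (1/(1-θ)) := by rw [hx, hy]; ring


/-- **Lower bound for the quadratic form of `−Δ* − V₋`** on normalized smooth
compactly supported vector fields:
`μ ∑_j ∫ |∇u_j|² + (λ+μ) ∫ |div u|² − ∫ V₋ |u|² ≥ −C (∫ V₋^{γ+d/2})^{1/γ}`. -/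
theorem lame_quadratic_form_lower_bound
    (d : ℕ) (hd : 3 ≤ d) (γ : ℝ) (hγ : 0 < γ)
    (lam mu : ℝ) (hmu : 0 < mu) (hlm : 0 < lam + 2 * mu) :
    ∃ C : ℝ, 0 < C ∧
      ∀ V : Ed d → ℝ, Measurable V →
      MemLp (fun x => max (-V x) 0) (ENNReal.ofReal (γ + d/2)) volume →
      ∀ u : Fin d → Ed d → ℂ,
        (∀ j, ContDiff ℝ (⊤ : ℕ∞) (u j)) → (∀ j, HasCompactSupport (u j)) →
        (∑ j, ∫ x, ‖u j x‖^2) = 1 →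
      mu * (∑ j, ∫ x, ∑ k, ‖pd (u j) k x‖^2)
        + (lam + mu) * (∫ x, ‖dvg u x‖^2)
        - (∫ x, max (-V x) 0 * ∑ j, ‖u j x‖^2)
      ≥ -C * (∫ x, max (-V x) 0 ^ (γ + (d : ℝ)/2)) ^ (1/γ) := by
  have hdR : (3:ℝ) ≤ (d:ℝ) := by exact_mod_cast hd
  set pR : ℝ := γ + (d:ℝ)/2 with hpRdef
  have hpR : 0 < pR := by positivity
  set c : ℝ := min mu (lam + 2*mu) with hcdef
  have hc : 0 < c := lt_min hmu hlm
  set θ : ℝ := (d:ℝ)/(2*pR) with hθdef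
  have hθpos : 0 < θ := by positivity
  have hθ1 : θ < 1 := by
    rw [hθdef, div_lt_one (by positivity)]
    rw [hpRdef]
    linarith
  have h1θ : 1 - θ = γ/pR := by
    rw [hθdef, hpRdef]
    field_simp
    ring
  refine ⟨c ^ (-((d:ℝ)/(2*γ))) * (SobC d + 1) ^ ((d:ℝ)/γ), ?_, ?_⟩
  · exact mul_pos (Real.rpow_pos_of_pos hc _)
      (Real.rpow_pos_of_pos (by linarith [SobC_nonneg d]) _)
  intro V hV hVp u hsm hcs hnorm
  set W : Ed d → ℝ := fun x => max (-V x) 0 with hWdef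
  have hWnn : ∀ x, 0 ≤ W x := fun x => le_max_right _ _
  have hWmeas : Measurable W := hV.neg.max measurable_const
  set T : ℝ := ∑ j, ∫ x, ∑ k, ‖pd (u j) k x‖^2 with hTdef
  set D : ℝ := ∫ x, ‖dvg u x‖^2 with hDdef
  set JW : ℝ := ∫ x, W x ^ pR with hJWdef
  have hJWnn : 0 ≤ JW := integral_nonneg fun x => Real.rpow_nonneg (hWnn x) _
  have hTnn : 0 ≤ T := Finset.sum_nonneg fun j _ => integral_nonneg fun x =>
    Finset.sum_nonneg fun k _ => sq_nonneg _
  have hDnn : 0 ≤ D := integral_nonneg fun x => sq_nonneg _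
  have hDleT : D ≤ T := by
    rw [hDdef, hTdef]
    refine (dvg_sq_le_sum hsm hcs).trans (le_of_eq ?_)
    exact Finset.sum_congr rfl fun j _ =>
      (integral_finset_sum _ fun k _ => integrable_pd_sq hsm hcs j k).symm
  have hquad : c * T ≤ mu * T + (lam + mu) * D := by
    rcases le_or_gt 0 (lam + mu) with h|h
    · have h1 : c ≤ mu := min_le_left _ _
      nlinarith
    · have h1 : c ≤ lam + 2*mu := min_le_right _ _
      nlinarith
  have hA := key_bound d hd γ hγ W hWmeas hWnn hVp u hsm hcs hnorm
  set a : ℝ := JW ^ (1/pR) * (SobC d + 1) ^ ((d:ℝ)/pR) with hadef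
  have hann : 0 ≤ a := mul_nonneg (Real.rpow_nonneg hJWnn _) (Real.rpow_nonneg
    (by linarith [SobC_nonneg d]) _)
  have hA2 : (∫ x, W x * ∑ j, ‖u j x‖^2) ≤ a * T ^ θ := by
    rw [hadef]
    exact hA
  have hyoung := young_ineq hθpos hθ1 hc hann hTnn
  have hexp1 : θ/(1-θ) = (d:ℝ)/(2*γ) := by
    rw [h1θ, hθdef]
    field_simp
  have hexp2 : 1/(1-θ) = pR/γ := by
    rw [h1θ]
    field_simp
  have hapow : a ^ (1/(1-θ)) = JW ^ (1/γ) * (SobC d + 1) ^ ((d:ℝ)/γ) := by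
    rw [hexp2, hadef, Real.mul_rpow (Real.rpow_nonneg hJWnn _)
        (Real.rpow_nonneg (by linarith [SobC_nonneg d]) _),
      ← Real.rpow_mul hJWnn, ← Real.rpow_mul (by linarith [SobC_nonneg d]),
      show 1/pR * (pR/γ) = 1/γ by field_simp,
      show (d:ℝ)/pR * (pR/γ) = (d:ℝ)/γ by field_simp]
  have hfin : (∫ x, W x * ∑ j, ‖u j x‖^2)
      ≤ c * T + c ^ (-((d:ℝ)/(2*γ))) * (JW ^ (1/γ) * (SobC d + 1) ^ ((d:ℝ)/γ)) := by
    refine hA2.trans (hyoung.trans (le_of_eq ?_))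
    rw [hexp1, hapow]
  have hgoal : mu * T + (lam + mu) * D - (∫ x, W x * ∑ j, ‖u j x‖^2)
      ≥ -(c ^ (-((d:ℝ)/(2*γ))) * (SobC d + 1) ^ ((d:ℝ)/γ)) * JW ^ (1/γ) := by
    nlinarith [hfin, hquad]
  exact hgoal
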